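/- arXiv:1906.08672 — 4 statements merged into one kernel-verified Lean document; each statement's English description precedes it below -/
import Mathlib

section
/- Let A, B, Q̃, Q̂, Z̃, Ẑ be n×n complex matrices with B invertible and Q̃, Q̂, Z̃, Ẑ unitary. Define Ã = Q̃*AZ̃, B̃ = Q̃*BZ̃, Q = Q̃Q̂, Z = Z̃Ẑ. Suppose r and s are rational functions defined on the spectrum of AB⁻¹, and let S ⊆ ℂⁿ be a subspace such that Q̃·S = r(AB⁻¹)·S and Q̂·S = s(ÃB̃⁻¹)·S. Then Q·S = (s·r)(AB⁻¹)·S, where s·r denotes the pointwise product. -/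
/-!
Write `M = A B⁻¹`. Unitary equivalence of the pencils gives `Ã B̃⁻¹ = Q̃ᴴ M Q̃`, and evaluating a
rational function commutes with conjugation (an algebra automorphism), so `Q̃ s(Ã B̃⁻¹) = s(M) Q̃`.
Therefore `Q S = Q̃ Q̂ S = Q̃ s(Ã B̃⁻¹) S = s(M) Q̃ S = s(M) r(M) S`, and `s(M) r(M) = (s r)(M)`
because all polynomials in `M` and their inverses commute.
-/

open Matrix Polynomial
open scoped Ring

theorem Commute.ringInverse_left {M₀ : Type*} [MonoidWithZero M₀] {a b : M₀}
    (h : Commute a b) : Commute a⁻¹ʳ b := by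
  by_cases ha : IsUnit a
  · obtain ⟨u, rfl⟩ := ha
    rw [Ring.inverse_unit]
    exact h.units_inv_left
  · rw [Ring.inverse_non_unit a ha]
    exact Commute.zero_left b

theorem Ring.mul_mul_inverse_mul {M₀ : Type*} [MonoidWithZero M₀] (a : M₀) {b c d : M₀}
    (hbc : Commute b c) (hbd : Commute b d) :
    a * c * (b * d)⁻¹ʳ = a * b⁻¹ʳ * (c * d⁻¹ʳ) := by
  have hb : Commute b⁻¹ʳ (c * d⁻¹ʳ) :=
    hbc.ringInverse_left.mul_right hbd.ringInverse_ringInverse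
  rw [Ring.mul_inverse_rev' hbd, mul_assoc a b⁻¹ʳ, hb.eq]
  simp only [mul_assoc]

theorem RingEquiv.map_ringInverse {R S : Type*} [Semiring R] [Semiring S] (f : R ≃+* S)
    (x : R) : f x⁻¹ʳ = (f x)⁻¹ʳ := by
  by_cases hx : IsUnit x
  · obtain ⟨u, rfl⟩ := hx
    have hfu : f u = (Units.map f.toMonoidHom u : S) := rfl
    rw [Ring.inverse_unit, hfu, Ring.inverse_unit, ← map_inv, Units.coe_map]
    rfl
  · rw [Ring.inverse_non_unit x hx, Ring.inverse_non_unit _ ((isUnit_map_iff f x).not.mpr hx),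
      map_zero]

theorem Polynomial.aeval_algEquiv_mul_ringInverse {R A B : Type*} [CommSemiring R] [Semiring A]
    [Semiring B] [Algebra R A] [Algebra R B] (f : A ≃ₐ[R] B) (x : A) (p q : R[X]) :
    aeval (f x) p * (aeval (f x) q)⁻¹ʳ = f (aeval x p * (aeval x q)⁻¹ʳ) := by
  rw [map_mul, aeval_algHom_apply, aeval_algHom_apply]
  exact congrArg _ ((f : A ≃+* B).map_ringInverse _).symm

namespace Matrix

variable {ι α : Type*} [Fintype ι]

theorem map_mulVecLin_mul [CommSemiring α] (X Y : Matrix ι ι α) (S : Submodule α (ι → α)) :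
    (S.map Y.mulVecLin).map X.mulVecLin = S.map (X * Y).mulVecLin := by
  rw [mulVecLin_mul, Submodule.map_comp]

variable [DecidableEq ι]

theorem aeval_mul_mul_nonsing_inv [CommRing α] (M : Matrix ι ι α) (p₁ q₁ p₂ q₂ : α[X]) :
    aeval M (p₁ * p₂) * (aeval M (q₁ * q₂))⁻¹ =
      aeval M p₁ * (aeval M q₁)⁻¹ * (aeval M p₂ * (aeval M q₂)⁻¹) := by
  simp only [nonsing_inv_eq_ringInverse, map_mul]
  exact Ring.mul_mul_inverse_mul _ ((Commute.all _ _).map _) ((Commute.all _ _).map _)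

variable [CommRing α] [StarRing α] {U : Matrix ι ι α}

theorem conjTranspose_mul_mul_mul_nonsing_inv (hU : U ∈ unitaryGroup ι α)
    {V : Matrix ι ι α} (hV : V ∈ unitaryGroup ι α) (A B : Matrix ι ι α) :
    Uᴴ * A * V * (Uᴴ * B * V)⁻¹ = Uᴴ * (A * B⁻¹) * U := by
  have hUU : U * Uᴴ = 1 := mem_unitaryGroup_iff.mp hU
  have hVV : V * Vᴴ = 1 := mem_unitaryGroup_iff.mp hV
  have hVV' : Vᴴ * V = 1 := mem_unitaryGroup_iff'.mp hV
  rw [mul_inv_rev, mul_inv_rev, inv_eq_left_inv hUU, inv_eq_left_inv hVV',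
    mul_assoc (Uᴴ * A) V, ← mul_assoc V, hVV, one_mul]
  simp only [mul_assoc]

theorem aeval_conj_mul_nonsing_inv (hU : U ∈ unitaryGroup ι α) (M : Matrix ι ι α)
    (p q : α[X]) :
    aeval (Uᴴ * M * U) p * (aeval (Uᴴ * M * U) q)⁻¹ = Uᴴ * (aeval M p * (aeval M q)⁻¹) * U := by
  simp only [nonsing_inv_eq_ringInverse]
  have := aeval_algEquiv_mul_ringInverse
    (Unitary.conjStarAlgAut α _ (star ⟨U, hU⟩)).toAlgEquiv M p q
  simpa [star_eq_conjTranspose] using this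

theorem mul_conj_of_mem_unitaryGroup (hU : U ∈ unitaryGroup ι α) (X : Matrix ι ι α) :
    U * (Uᴴ * X * U) = X * U := by
  have hUU : U * Uᴴ = 1 := mem_unitaryGroup_iff.mp hU
  rw [← mul_assoc, ← mul_assoc, hUU, one_mul]

end Matrix

/-- The rational functions are `r = pr/qr` and `s = ps/qs`. -/
theorem accumulated_subspace_iteration_general (n : ℕ)
    (A B Qt Qh Zt : Matrix (Fin n) (Fin n) ℂ)
    (hQt : Qt ∈ Matrix.unitaryGroup (Fin n) ℂ)
    (hZt : Zt ∈ Matrix.unitaryGroup (Fin n) ℂ)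
    (At Bt Q : Matrix (Fin n) (Fin n) ℂ)
    (hAt : At = Qtᴴ * A * Zt) (hBt : Bt = Qtᴴ * B * Zt)
    (hQ : Q = Qt * Qh)
    (pr qr ps qs : Polynomial ℂ)
    (S : Submodule ℂ (Fin n → ℂ))
    (hr : Submodule.map (Matrix.mulVecLin Qt) S =
      Submodule.map (Matrix.mulVecLin
        (Polynomial.aeval (A * B⁻¹) pr * (Polynomial.aeval (A * B⁻¹) qr)⁻¹)) S)
    (hs : Submodule.map (Matrix.mulVecLin Qh) S =
      Submodule.map (Matrix.mulVecLin
        (Polynomial.aeval (At * Bt⁻¹) ps * (Polynomial.aeval (At * Bt⁻¹) qs)⁻¹)) S) :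
    Submodule.map (Matrix.mulVecLin Q) S =
      Submodule.map (Matrix.mulVecLin
        (Polynomial.aeval (A * B⁻¹) (ps * pr) *
          (Polynomial.aeval (A * B⁻¹) (qs * qr))⁻¹)) S := by
  set M := A * B⁻¹
  set s := aeval M ps * (aeval M qs)⁻¹
  have hs' : S.map Qh.mulVecLin = S.map (Qtᴴ * s * Qt).mulVecLin := by
    rwa [hAt, hBt, conjTranspose_mul_mul_mul_nonsing_inv hQt hZt,
      aeval_conj_mul_nonsing_inv hQt] at hs
  calc S.map Q.mulVecLin
      = (S.map (Qtᴴ * s * Qt).mulVecLin).map Qt.mulVecLin := by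
        rw [hQ, ← map_mulVecLin_mul, hs']
    _ = (S.map Qt.mulVecLin).map s.mulVecLin := by
        rw [map_mulVecLin_mul, map_mulVecLin_mul, mul_conj_of_mem_unitaryGroup hQt]
    _ = _ := by
        rw [hr, map_mulVecLin_mul, aeval_mul_mul_nonsing_inv]

/-- Accumulation of subspace-iteration actions over two successive changes of coordinates
(Lemma on accumulated steps).  Rational functions `r = pr/qr` and `s = ps/qs` are represented
by pairs of polynomials whose denominators evaluate to invertible matrices. -/
theorem accumulated_subspace_iteration (n : ℕ)
    (A B Qt Qh Zt Zh : Matrix (Fin n) (Fin n) ℂ)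
    (hB : IsUnit B)
    (hQt : Qt ∈ Matrix.unitaryGroup (Fin n) ℂ)
    (hQh : Qh ∈ Matrix.unitaryGroup (Fin n) ℂ)
    (hZt : Zt ∈ Matrix.unitaryGroup (Fin n) ℂ)
    (hZh : Zh ∈ Matrix.unitaryGroup (Fin n) ℂ)
    (At Bt Q Z : Matrix (Fin n) (Fin n) ℂ)
    (hAt : At = Qtᴴ * A * Zt) (hBt : Bt = Qtᴴ * B * Zt)
    (hQ : Q = Qt * Qh) (hZ : Z = Zt * Zh)
    (pr qr ps qs : Polynomial ℂ)
    (hqr : IsUnit (Polynomial.aeval (A * B⁻¹) qr))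
    (hqs : IsUnit (Polynomial.aeval (At * Bt⁻¹) qs))
    (S : Submodule ℂ (Fin n → ℂ))
    (hr : Submodule.map (Matrix.mulVecLin Qt) S =
      Submodule.map (Matrix.mulVecLin
        (Polynomial.aeval (A * B⁻¹) pr * (Polynomial.aeval (A * B⁻¹) qr)⁻¹)) S)
    (hs : Submodule.map (Matrix.mulVecLin Qh) S =
      Submodule.map (Matrix.mulVecLin
        (Polynomial.aeval (At * Bt⁻¹) ps * (Polynomial.aeval (At * Bt⁻¹) qs)⁻¹)) S) :
    Submodule.map (Matrix.mulVecLin Q) S =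
      Submodule.map (Matrix.mulVecLin
        (Polynomial.aeval (A * B⁻¹) (ps * pr) *
          (Polynomial.aeval (A * B⁻¹) (qs * qr))⁻¹)) S :=
  accumulated_subspace_iteration_general n A B Qt Qh Zt hQt hZt At Bt Q hAt hBt hQ pr qr ps qs S hr
    hs
end

section
/- Let (A, B) be a proper n×n upper Hessenberg pair with first pole σ₁ = a₂₁/b₂₁, and suppose ρ ∈ ℂ is such that (A - ρB)e₁ and (A - σ₁B)e₁ are both nonzero multiples related by a unitary core transformation: if Q₁ is a unitary matrix acting only on coordinates 1,2 with Q₁*(A - ρB)e₁ = γe₁ for some γ ≠ 0, and (A - σ₁B)e₁ = γ̌e₁ with γ̌ ≠ 0, then Q₁e₁ = δ·(A - ρB)(A - σ₁B)⁻¹e₁ for some nonzero scalar δ. -/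
open Matrix

theorem Matrix.mulVec_eq_smul_mulVec_of_conjTranspose_mulVec_eq_smul {ι α : Type*} [Fintype ι]
    [DecidableEq ι] [CommRing α] [StarRing α] {Q : Matrix ι ι α} (hQ : Q ∈ unitaryGroup ι α)
    {v w : ι → α} {c : α} (h : Qᴴ *ᵥ v = c • w) : v = c • Q *ᵥ w := by
  rw [← mulVec_smul, ← h, mulVec_mulVec, ← star_eq_conjTranspose,
    mem_unitaryGroup_iff.mp hQ, one_mulVec]

theorem Matrix.inv_mulVec_eq_inv_smul_of_mulVec_eq_smul {ι K : Type*} [Fintype ι]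
    [DecidableEq ι] [Field K] {M : Matrix ι ι K} (hM : IsUnit M) {v : ι → K} {c : K}
    (hc : c ≠ 0) (h : M *ᵥ v = c • v) : M⁻¹ *ᵥ v = c⁻¹ • v := by
  have hv : v = c • M⁻¹ *ᵥ v := by
    rw [← mulVec_smul, ← h, mulVec_mulVec, nonsing_inv_mul _ ((isUnit_iff_isUnit_det _).mp hM),
      one_mulVec]
  rw [eq_inv_smul_iff₀ hc, ← hv]

theorem type_one_move_first_column_general (n : ℕ)
    (A B Q₁ : Matrix (Fin (n + 2)) (Fin (n + 2)) ℂ)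
    (σ₁ ρ γ γc : ℂ)
    (hQ₁ : Q₁ ∈ Matrix.unitaryGroup (Fin (n + 2)) ℂ)
    (hγ : γ ≠ 0)
    (hq : (Q₁ᴴ).mulVec ((A - ρ • B).mulVec ((Pi.single 0 1 : Fin (n + 2) → ℂ))) = γ • (Pi.single 0 1 : Fin (n + 2) → ℂ))
    (hγc : γc ≠ 0)
    (hσ : (A - σ₁ • B).mulVec ((Pi.single 0 1 : Fin (n + 2) → ℂ)) = γc • (Pi.single 0 1 : Fin (n + 2) → ℂ))
    (hinv : IsUnit (A - σ₁ • B)) :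
    ∃ δ : ℂ, δ ≠ 0 ∧
      Q₁.mulVec ((Pi.single 0 1 : Fin (n + 2) → ℂ)) =
        δ • ((A - ρ • B) * (A - σ₁ • B)⁻¹).mulVec ((Pi.single 0 1 : Fin (n + 2) → ℂ)) := by
  have hρ := mulVec_eq_smul_mulVec_of_conjTranspose_mulVec_eq_smul hQ₁ hq
  have hσinv := inv_mulVec_eq_inv_smul_of_mulVec_eq_smul hinv hγc hσ
  refine ⟨γc * γ⁻¹, mul_ne_zero hγc (inv_ne_zero hγ), ?_⟩
  rw [← mulVec_mulVec, hσinv, mulVec_smul, hρ, smul_smul, smul_smul,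
    show γc * γ⁻¹ * γc⁻¹ * γ = 1 by field_simp, one_smul]

/-- Proposition: the core transformation `Q₁` replacing the first pole `σ₁` by `ρ` satisfies
`Q₁ e₁ = δ (A - ρB)(A - σ₁B)⁻¹ e₁` for some nonzero `δ`. -/
theorem type_one_move_first_column (n : ℕ)
    (A B Q₁ : Matrix (Fin (n + 2)) (Fin (n + 2)) ℂ)
    (hA : ∀ i k : Fin (n + 2), (k : ℕ) + 1 < (i : ℕ) → A i k = 0)
    (hB : ∀ i k : Fin (n + 2), (k : ℕ) + 1 < (i : ℕ) → B i k = 0)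
    (σ₁ ρ γ γc : ℂ)
    (hQ₁ : Q₁ ∈ Matrix.unitaryGroup (Fin (n + 2)) ℂ)
    (hcore : ∀ i k : Fin (n + 2), (1 < (i : ℕ) ∨ 1 < (k : ℕ)) →
      Q₁ i k = (1 : Matrix (Fin (n + 2)) (Fin (n + 2)) ℂ) i k)
    (hγ : γ ≠ 0)
    (hq : (Q₁ᴴ).mulVec ((A - ρ • B).mulVec ((Pi.single 0 1 : Fin (n + 2) → ℂ))) = γ • (Pi.single 0 1 : Fin (n + 2) → ℂ))
    (hγc : γc ≠ 0)
    (hσ : (A - σ₁ • B).mulVec ((Pi.single 0 1 : Fin (n + 2) → ℂ)) = γc • (Pi.single 0 1 : Fin (n + 2) → ℂ))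
    (hinv : IsUnit (A - σ₁ • B)) :
    ∃ δ : ℂ, δ ≠ 0 ∧
      Q₁.mulVec ((Pi.single 0 1 : Fin (n + 2) → ℂ)) =
        δ • ((A - ρ • B) * (A - σ₁ • B)⁻¹).mulVec ((Pi.single 0 1 : Fin (n + 2) → ℂ)) :=
  type_one_move_first_column_general n A B Q₁ σ₁ ρ γ γc hQ₁ hγ hq hγc hσ hinv
end

section
/- Let (A, B) be a proper n×n upper Hessenberg pair with last pole σ_{n-1} = a_{n,n-1}/b_{n,n-1}, and let τ ∈ ℂ. Suppose Z_{n-1} is a unitary matrix acting only on coordinates n-1, n with eₙᵀ(A - τB)Z_{n-1} = γeₙᵀ for some γ ≠ 0, and eₙᵀ(A - σ_{n-1}B) = γ̌eₙᵀ with γ̌ ≠ 0 and A - σ_{n-1}B invertible. Then eₙᵀZ_{n-1}* = δ·eₙᵀ(A - σ_{n-1}B)⁻¹(A - τB) for some nonzero scalar δ. -/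
/-!
Multiplying `eₙᵀ(A - τB)Z = γeₙᵀ` on the right by `Z* = Z⁻¹` gives `eₙᵀ(A - τB) = γ eₙᵀZ*`, and
`eₙᵀ` is a left eigenvector of `A - σB` with eigenvalue `γ̌`, hence of `(A - σB)⁻¹` with eigenvalue
`γ̌⁻¹`. So `eₙᵀ(A - σB)⁻¹(A - τB) = γ̌⁻¹γ eₙᵀZ*`, and `δ = γ⁻¹γ̌`.
-/

namespace Matrix

variable {m : Type*} [Fintype m] [DecidableEq m]

theorem vecMul_eq_vecMul_conjTranspose_of_vecMul_mul_mem_unitaryGroup {α : Type*} [CommRing α]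
    [StarRing α] {M U : Matrix m m α} {v w : m → α} (hU : U ∈ unitaryGroup m α)
    (h : vecMul v (M * U) = w) : vecMul v M = vecMul w Uᴴ := by
  rw [← h, vecMul_vecMul, Matrix.mul_assoc, ← star_eq_conjTranspose, mem_unitaryGroup_iff.mp hU,
    Matrix.mul_one]

theorem vecMul_inv_eq_inv_smul_of_vecMul_eq_smul {K : Type*} [Field K] {M : Matrix m m K}
    {v : m → K} {c : K} (hM : IsUnit M) (hc : c ≠ 0) (h : vecMul v M = c • v) :
    vecMul v M⁻¹ = c⁻¹ • v := by
  rw [eq_inv_smul_iff₀ hc, ← smul_vecMul, ← h, vecMul_vecMul,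
    mul_nonsing_inv _ ((isUnit_iff_isUnit_det M).mp hM), vecMul_one]

end Matrix

open Matrix

theorem type_one_move_last_row_general (n : ℕ)
    (A B Z : Matrix (Fin (n + 2)) (Fin (n + 2)) ℂ)
    (σ τ γ γc : ℂ)
    (hZ : Z ∈ Matrix.unitaryGroup (Fin (n + 2)) ℂ)
    (hγ : γ ≠ 0)
    (hz : Matrix.vecMul (Pi.single (Fin.last (n + 1)) 1 : Fin (n + 2) → ℂ)
        ((A - τ • B) * Z) = γ • (Pi.single (Fin.last (n + 1)) 1 : Fin (n + 2) → ℂ))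
    (hγc : γc ≠ 0)
    (hσ : Matrix.vecMul (Pi.single (Fin.last (n + 1)) 1 : Fin (n + 2) → ℂ) (A - σ • B) =
      γc • (Pi.single (Fin.last (n + 1)) 1 : Fin (n + 2) → ℂ))
    (hinv : IsUnit (A - σ • B)) :
    ∃ δ : ℂ, δ ≠ 0 ∧
      Matrix.vecMul (Pi.single (Fin.last (n + 1)) 1 : Fin (n + 2) → ℂ) Zᴴ =
        δ • Matrix.vecMul (Pi.single (Fin.last (n + 1)) 1 : Fin (n + 2) → ℂ)
          ((A - σ • B)⁻¹ * (A - τ • B)) := by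
  have hτ := vecMul_eq_vecMul_conjTranspose_of_vecMul_mul_mem_unitaryGroup hZ hz
  have hσinv := vecMul_inv_eq_inv_smul_of_vecMul_eq_smul hinv hγc hσ
  refine ⟨γ⁻¹ * γc, mul_ne_zero (inv_ne_zero hγ) hγc, ?_⟩
  rw [← vecMul_vecMul, hσinv, smul_vecMul, hτ, smul_vecMul, smul_smul, smul_smul,
    show γ⁻¹ * γc * γc⁻¹ * γ = 1 by field_simp, one_smul]

/-- Proposition: the core transformation `Z_{n-1}` replacing the last pole `σ_{n-1}` by `τ`
satisfies `eₙᵀ Z_{n-1}* = δ eₙᵀ (A - σ_{n-1}B)⁻¹(A - τB)` for some nonzero `δ`. -/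
theorem type_one_move_last_row (n : ℕ)
    (A B Z : Matrix (Fin (n + 2)) (Fin (n + 2)) ℂ)
    (hA : ∀ i k : Fin (n + 2), (k : ℕ) + 1 < (i : ℕ) → A i k = 0)
    (hB : ∀ i k : Fin (n + 2), (k : ℕ) + 1 < (i : ℕ) → B i k = 0)
    (σ τ γ γc : ℂ)
    (hZ : Z ∈ Matrix.unitaryGroup (Fin (n + 2)) ℂ)
    (hcore : ∀ i k : Fin (n + 2), ((i : ℕ) < n ∨ (k : ℕ) < n) →
      Z i k = (1 : Matrix (Fin (n + 2)) (Fin (n + 2)) ℂ) i k)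
    (hγ : γ ≠ 0)
    (hz : Matrix.vecMul (Pi.single (Fin.last (n + 1)) 1 : Fin (n + 2) → ℂ)
        ((A - τ • B) * Z) = γ • (Pi.single (Fin.last (n + 1)) 1 : Fin (n + 2) → ℂ))
    (hγc : γc ≠ 0)
    (hσ : Matrix.vecMul (Pi.single (Fin.last (n + 1)) 1 : Fin (n + 2) → ℂ) (A - σ • B) =
      γc • (Pi.single (Fin.last (n + 1)) 1 : Fin (n + 2) → ℂ))
    (hinv : IsUnit (A - σ • B)) :
    ∃ δ : ℂ, δ ≠ 0 ∧
      Matrix.vecMul (Pi.single (Fin.last (n + 1)) 1 : Fin (n + 2) → ℂ) Zᴴ =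
        δ • Matrix.vecMul (Pi.single (Fin.last (n + 1)) 1 : Fin (n + 2) → ℂ)
          ((A - σ • B)⁻¹ * (A - τ • B)) :=
  type_one_move_last_row_general n A B Z σ τ γ γc hZ hγ hz hγc hσ hinv
end

section
/- Let A, B be 2×2 upper triangular with A = [[α₁, a],[0, α₂]], B = [[β₁, b],[0, β₂]], and suppose x = (α₂b - β₂a, β₂α₁ - α₂β₁)ᵀ ≠ 0. Let Z be a 2×2 unitary matrix with Z e₁ = γ⁻¹x where γ = ‖x‖, and let Q be a 2×2 unitary matrix whose first column is proportional to y = (α₁b - β₁a, β₂α₁ - α₂β₁)ᵀ (which is nonzero). Then Â = Q*AZ and B̂ = Q*BZ are both upper triangular, with Âe₁ parallel to α₂e₁ and B̂e₁ parallel to β₂e₁; in particular â₁₁/b̂₁₁ = α₂/β₂ provided β₂ ≠ 0. -/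
/-!
`x` is an eigenvector of the pencil for `(α₂, β₂)`: a direct computation gives `A x = α₂ y` and
`B x = β₂ y`. Since `Z e₁ = γ⁻¹ x` and, `Q` being unitary with `Q e₁ = c y`, `Qᴴ y = c⁻¹ e₁`,
the first columns of `Qᴴ A Z` and `Qᴴ B Z` are `t α₂ e₁` and `t β₂ e₁` with `t = γ⁻¹ c⁻¹`,
which is nonzero because `γ` is the Euclidean norm of `x ≠ 0`.
-/

open Matrix

theorem Real.sqrt_norm_sq_add_norm_sq_ne_zero {𝕜 : Type*} [RCLike 𝕜] {x : Fin 2 → 𝕜}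
    (hx : x ≠ 0) : √(‖x 0‖ ^ 2 + ‖x 1‖ ^ 2) ≠ 0 := by
  have hnorm : ‖(WithLp.toLp 2 x : EuclideanSpace 𝕜 (Fin 2))‖ = √(‖x 0‖ ^ 2 + ‖x 1‖ ^ 2) := by
    simp [EuclideanSpace.norm_eq, Fin.sum_univ_two]
  rw [← hnorm, norm_ne_zero_iff]
  exact fun h => hx (by simpa using congrArg WithLp.ofLp h)

theorem Matrix.conjTranspose_mulVec_eq_of_mem_unitaryGroup {n 𝕜 : Type*} [Fintype n]
    [DecidableEq n] [Field 𝕜] [StarRing 𝕜] {Q : Matrix n n 𝕜} (hQ : Q ∈ unitaryGroup n 𝕜)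
    {v w : n → 𝕜} {c : 𝕜} (hc : c ≠ 0) (hQv : Q *ᵥ v = c • w) : Qᴴ *ᵥ w = c⁻¹ • v := by
  have hQQ : Qᴴ * Q = 1 := (mem_unitaryGroup_iff'.mp hQ)
  calc Qᴴ *ᵥ w = c⁻¹ • Qᴴ *ᵥ (c • w) := by rw [mulVec_smul, inv_smul_smul₀ hc]
    _ = c⁻¹ • v := by rw [← hQv, mulVec_mulVec, hQQ, one_mulVec]

theorem Matrix.pencil_fst_mulVec_swapVector {R : Type*} [CommRing R] (α₁ α₂ β₁ β₂ a b : R) :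
    !![α₁, a; 0, α₂] *ᵥ ![α₂ * b - β₂ * a, β₂ * α₁ - α₂ * β₁] =
      α₂ • ![α₁ * b - β₁ * a, β₂ * α₁ - α₂ * β₁] := by
  ext i; fin_cases i <;> simp [mulVec, dotProduct]
  ring

theorem Matrix.pencil_snd_mulVec_swapVector {R : Type*} [CommRing R] (α₁ α₂ β₁ β₂ a b : R) :
    !![β₁, b; 0, β₂] *ᵥ ![α₂ * b - β₂ * a, β₂ * α₁ - α₂ * β₁] =
      β₂ • ![α₁ * b - β₁ * a, β₂ * α₁ - α₂ * β₁] := by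
  ext i; fin_cases i <;> simp [mulVec, dotProduct]
  ring

theorem Matrix.mul_mul_mulVec_eq_smul {l m n k R : Type*} [Fintype m] [Fintype n] [Fintype k]
    [CommRing R] {P : Matrix l m R} {A : Matrix m n R} {Z : Matrix n k R} {e : k → R}
    {x : n → R} {y : m → R} {f : l → R} {s u α : R}
    (hZ : Z *ᵥ e = s • x) (hA : A *ᵥ x = α • y) (hP : P *ᵥ y = u • f) :
    (P * A * Z) *ᵥ e = (s * u * α) • f := by
  rw [← mulVec_mulVec, ← mulVec_mulVec, hZ, mulVec_smul, hA, mulVec_smul, mulVec_smul, hP,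
    smul_smul, smul_smul, mul_right_comm]

theorem swap_procedure_correct_general (α₁ α₂ β₁ β₂ a b : ℂ)
    (A B Q Z : Matrix (Fin 2) (Fin 2) ℂ)
    (hA : A = !![α₁, a; 0, α₂]) (hB : B = !![β₁, b; 0, β₂])
    (x y : Fin 2 → ℂ)
    (hx : x = ![α₂ * b - β₂ * a, β₂ * α₁ - α₂ * β₁])
    (hy : y = ![α₁ * b - β₁ * a, β₂ * α₁ - α₂ * β₁])
    (hxne : x ≠ 0)
    (hQu : Q ∈ Matrix.unitaryGroup (Fin 2) ℂ)
    (γ : ℝ) (hγ : γ = Real.sqrt (‖x 0‖ ^ 2 + ‖x 1‖ ^ 2))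
    (hZ : ∀ i : Fin 2, Z i 0 = (γ : ℂ)⁻¹ * x i)
    (c : ℂ) (hc : c ≠ 0)
    (hQ : ∀ i : Fin 2, Q i 0 = c * y i) :
    (Qᴴ * A * Z) 1 0 = 0 ∧ (Qᴴ * B * Z) 1 0 = 0 ∧
      ∃ t : ℂ, t ≠ 0 ∧
        (Qᴴ * A * Z).mulVec (Pi.single 0 1 : Fin 2 → ℂ) =
            (t * α₂) • (Pi.single 0 1 : Fin 2 → ℂ) ∧
        (Qᴴ * B * Z).mulVec (Pi.single 0 1 : Fin 2 → ℂ) =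
            (t * β₂) • (Pi.single 0 1 : Fin 2 → ℂ) ∧
        (β₂ ≠ 0 → (Qᴴ * A * Z) 0 0 * β₂ = (Qᴴ * B * Z) 0 0 * α₂) := by
  have hγ0 : (γ : ℂ) ≠ 0 := by
    rw [hγ]; exact_mod_cast Real.sqrt_norm_sq_add_norm_sq_ne_zero hxne
  have hZe : Z *ᵥ Pi.single 0 1 = (γ : ℂ)⁻¹ • x := by
    ext i; simp [hZ]
  have hQe : Q *ᵥ Pi.single 0 1 = c • y := by
    ext i; simp [hQ]
  have hQy := conjTranspose_mulVec_eq_of_mem_unitaryGroup hQu hc hQe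
  have hAx : A *ᵥ x = α₂ • y := by rw [hA, hx, hy]; exact pencil_fst_mulVec_swapVector ..
  have hBx : B *ᵥ x = β₂ • y := by rw [hB, hx, hy]; exact pencil_snd_mulVec_swapVector ..
  have hAe := mul_mul_mulVec_eq_smul hZe hAx hQy
  have hBe := mul_mul_mulVec_eq_smul hZe hBx hQy
  have entry (M : Matrix (Fin 2) (Fin 2) ℂ) (s : ℂ) (h : M *ᵥ Pi.single 0 1 = s • Pi.single 0 1) :
      M 0 0 = s ∧ M 1 0 = 0 := by
    simpa [mulVec_single_one] using And.intro (congrFun h 0) (congrFun h 1)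
  obtain ⟨hA00, hA10⟩ := entry _ _ hAe
  obtain ⟨hB00, hB10⟩ := entry _ _ hBe
  refine ⟨hA10, hB10, _, mul_ne_zero (inv_ne_zero hγ0) (inv_ne_zero hc), hAe, hBe, fun _ => ?_⟩
  rw [hA00, hB00]; ring

/-- Correctness of the swapping procedure (exact method 1): the transformed pencil is upper
triangular with the eigenvalue `α₂/β₂` on top. -/
theorem swap_procedure_correct (α₁ α₂ β₁ β₂ a b : ℂ)
    (A B Q Z : Matrix (Fin 2) (Fin 2) ℂ)
    (hA : A = !![α₁, a; 0, α₂]) (hB : B = !![β₁, b; 0, β₂])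
    (x y : Fin 2 → ℂ)
    (hx : x = ![α₂ * b - β₂ * a, β₂ * α₁ - α₂ * β₁])
    (hy : y = ![α₁ * b - β₁ * a, β₂ * α₁ - α₂ * β₁])
    (hxne : x ≠ 0) (hyne : y ≠ 0)
    (hZu : Z ∈ Matrix.unitaryGroup (Fin 2) ℂ)
    (hQu : Q ∈ Matrix.unitaryGroup (Fin 2) ℂ)
    (γ : ℝ) (hγ : γ = Real.sqrt (‖x 0‖ ^ 2 + ‖x 1‖ ^ 2))
    (hZ : ∀ i : Fin 2, Z i 0 = (γ : ℂ)⁻¹ * x i)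
    (c : ℂ) (hc : c ≠ 0)
    (hQ : ∀ i : Fin 2, Q i 0 = c * y i) :
    (Qᴴ * A * Z) 1 0 = 0 ∧ (Qᴴ * B * Z) 1 0 = 0 ∧
      ∃ t : ℂ, t ≠ 0 ∧
        (Qᴴ * A * Z).mulVec (Pi.single 0 1 : Fin 2 → ℂ) =
            (t * α₂) • (Pi.single 0 1 : Fin 2 → ℂ) ∧
        (Qᴴ * B * Z).mulVec (Pi.single 0 1 : Fin 2 → ℂ) =
            (t * β₂) • (Pi.single 0 1 : Fin 2 → ℂ) ∧
        (β₂ ≠ 0 → (Qᴴ * A * Z) 0 0 * β₂ = (Qᴴ * B * Z) 0 0 * α₂) :=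
  swap_procedure_correct_general α₁ α₂ β₁ β₂ a b A B Q Z hA hB x y hx hy hxne hQu γ hγ hZ c hc hQ
end
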